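/- arXiv:1609.01969 — 2 statements merged into one kernel-verified Lean document; each statement's English description precedes it below -/
import Mathlib

section
/- Let G be a finite group and let K be a sol-component of G. Then K is either constrained or semisimple; that is, either E(K) = 1 or E(K) = K. -/
open Pointwise

/-- A subgroup `H` of `G` is *subnormal* if there is a finite chain
`H = c 0 ⊴ c 1 ⊴ ⋯ ⊴ c n = G` with each term normal in the next. -/
def IsSubnormal {G : Type*} [Group G] (H : Subgroup G) : Prop :=
  ∃ (n : ℕ) (c : ℕ → Subgroup G), c 0 = H ∧ c n = ⊤ ∧
    ∀ i < n, c i ≤ c (i + 1) ∧ ((c i).subgroupOf (c (i + 1))).Normal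

/-- A group is *quasisimple* if it is perfect and its quotient by its center is simple. -/
def IsQuasisimpleGroup (Q : Type*) [Group Q] : Prop :=
  commutator Q = ⊤ ∧ IsSimpleGroup (Q ⧸ Subgroup.center Q)

/-- A *component* of `G` is a quasisimple subnormal subgroup. -/
def IsComponent {G : Type*} [Group G] (K : Subgroup G) : Prop :=
  IsSubnormal K ∧ IsQuasisimpleGroup ↥K

/-- The *layer* `E(G)`: the subgroup generated by all components of `G`. -/
def layer (G : Type*) [Group G] : Subgroup G :=
  sSup {K : Subgroup G | IsComponent K}

/-- `Sol(G)`: the join of all solvable normal subgroups of `G`. -/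
def solRadical (G : Type*) [Group G] : Subgroup G :=
  sSup {N : Subgroup G | N.Normal ∧ IsSolvable ↥N}

instance solRadical_normal (G : Type*) [Group G] : (solRadical G).Normal := by
  constructor
  intro n hn g
  have h : solRadical G ≤ (solRadical G).comap (MulAut.conj g).toMonoidHom := by
    apply sSup_le
    intro N hN x hx
    have hmem : g * x * g⁻¹ ∈ N := hN.1.conj_mem x hx g
    exact Subgroup.mem_comap.mpr
      (le_sSup hN (by simpa [MulAut.conj_apply] using hmem))
  simpa [MulAut.conj_apply] using h hn

/-- A *sol-component* of `G` is a perfect subnormal subgroup of `G` whose image in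
`G/Sol(G)` is a component of `G/Sol(G)`. -/
def IsSolComponent {G : Type*} [Group G] (K : Subgroup G) : Prop :=
  IsSubnormal K ∧ commutator ↥K = ⊤ ∧
    IsComponent (K.map (QuotientGroup.mk' (solRadical G)))

/-- `E_sol(G)`: the subgroup generated by all sol-components of `G`. -/
def solLayer (G : Type*) [Group G] : Subgroup G :=
  sSup {K : Subgroup G | IsSolComponent K}

/-! Let `Q` be the image of `K` in `G/Sol(G)`: a quasisimple group, onto which `K` maps with
solvable kernel `K ∩ Sol(G)`. If `K` has a component `L ≠ 1`, then `L` is perfect, so it does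
not lie in the kernel, and its image `M` is a nontrivial perfect subnormal subgroup of `Q`.
Modulo `Z(Q)` the image of `M` is subnormal in a simple group, so it is trivial or everything;
the first would make `M` central, hence abelian and trivial, so `M Z(Q) = Q` and
`Q = [Q, Q] ≤ M`. Thus `K = L (K ∩ Sol(G)) ≤ E(K) (K ∩ Sol(G))`, so `K/E(K)` is solvable;
being perfect, it is trivial. -/

open Subgroup QuotientGroup

section

variable {G : Type*} [Group G]

theorem isSubnormal_iff_subgroup_isSubnormal {H : Subgroup G} :
    _root_.IsSubnormal H ↔ H.IsSubnormal := by
  constructor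
  · rintro ⟨n, c, rfl, hn, hc⟩
    exact Nat.decreasingInduction (motive := fun i _ => (c i).IsSubnormal)
      (fun k hk ih => .step _ _ (hc k hk).1 ih (hc k hk).2) (hn ▸ .top) n.zero_le
  · intro h
    obtain ⟨n, c, hmono, hnormal, h0, hn⟩ := h.exists_chain
    exact ⟨n, c, h0, hn, fun i _ => ⟨hmono i.le_succ, hnormal i⟩⟩

theorem normal_sSup_of_forall_map_conj_mem {S : Set (Subgroup G)}
    (hS : ∀ g : G, ∀ H ∈ S, H.map (MulAut.conj g).toMonoidHom ∈ S) : (sSup S).Normal :=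
  ⟨fun _ hn g => (sSup_le fun H hH => map_le_iff_le_comap.mp (le_sSup (hS g H hH))) hn⟩

theorem commutator_eq_top_of_surjective {G' : Type*} [Group G'] (f : G →* G')
    (hf : Function.Surjective f) (h : commutator G = ⊤) : commutator G' = ⊤ := by
  rw [commutator_def, ← map_top_of_surjective f hf, ← map_commutator, ← commutator_def, h]

theorem subsingleton_of_isSolvable_of_commutator_eq_top [Group.IsSolvable G]
    (h : commutator G = ⊤) : Subsingleton G := by
  by_contra hG
  rw [not_subsingleton_iff_nontrivial] at hG
  exact (Group.IsSolvable.commutator_lt_top_of_nontrivial G).ne h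

theorem isSolvable_sup_of_normal (N M : Subgroup G) [N.Normal] [Group.IsSolvable N]
    [Group.IsSolvable M] : Group.IsSolvable ↥(N ⊔ M) := by
  have hmap : (N ⊔ M).map (mk' N) = M.map (mk' N) := by
    rw [Subgroup.map_sup, (Subgroup.map_eq_bot_iff _).mpr (ker_mk' N).ge, bot_sup_eq]
  have : Group.IsSolvable ↥((N ⊔ M).map (mk' N)) :=
    hmap ▸ Group.isSolvable_of_surjective ((mk' N).subgroupMap_surjective M)
  refine Group.isSolvable_of_ker_le_range (inclusion le_sup_left)
    ((mk' N).subgroupMap (N ⊔ M)) fun x hx => ?_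
  have hxN : (x : G) ∈ N := (QuotientGroup.eq_one_iff _).mp (congrArg Subtype.val hx)
  exact ⟨⟨x, hxN⟩, rfl⟩

theorem isSolvable_solRadical [Finite G] : Group.IsSolvable (solRadical G) := by
  have hS : SupClosed {N : Subgroup G | N.Normal ∧ Group.IsSolvable N} := by
    rintro N ⟨_, _⟩ M ⟨_, _⟩
    exact ⟨sup_normal N M, isSolvable_sup_of_normal N M⟩
  refine (hS.sSup_mem_of_nonempty (Set.toFinite _) ?_ subset_rfl).2
  exact ⟨⊥, normal_bot, inferInstance⟩

theorem isSolvable_ker_subgroupMap {G' : Type*} [Group G'] (f : G →* G')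
    [Group.IsSolvable f.ker] (K : Subgroup G) : Group.IsSolvable (f.subgroupMap K).ker :=
  Group.isSolvable_of_isSolvable_injective
    (f := ((K.subtype.comp (f.subgroupMap K).ker.subtype).codRestrict f.ker
      fun x => congrArg Subtype.val x.2))
    ((MonoidHom.injective_codRestrict _ _ _).mpr
      (K.subtype_injective.comp Subtype.val_injective))

theorem eq_top_of_sup_eq_top_of_isSolvable (hG : commutator G = ⊤) {E N : Subgroup G}
    [E.Normal] [Group.IsSolvable N] (h : E ⊔ N = ⊤) : E = ⊤ := by
  have hN : N.map (mk' E) = ⊤ := by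
    rw [← bot_sup_eq (N.map _), ← (Subgroup.map_eq_bot_iff _).mpr (ker_mk' E).ge,
      ← Subgroup.map_sup, h, map_top_of_surjective _ (mk'_surjective E)]
  have : Group.IsSolvable (G ⧸ E) := by
    refine Group.isSolvable_of_surjective (f := (mk' E).comp N.subtype) ?_
    rw [← MonoidHom.range_eq_top, MonoidHom.range_comp, range_subtype, hN]
  exact QuotientGroup.subsingleton_iff.mp (subsingleton_of_isSolvable_of_commutator_eq_top
    (commutator_eq_top_of_surjective _ (mk'_surjective E) hG))

theorem eq_bot_of_le_center_of_commutator_eq_top {M : Subgroup G} (hM : M ≤ center G)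
    (hperf : commutator M = ⊤) : M = ⊥ := by
  have hMM : ⁅M, M⁆ = M := by
    rw [← M.map_subtype_commutator, hperf, ← MonoidHom.range_eq_map, M.range_subtype]
  rw [← hMM, eq_bot_iff, ← commutator_center_right M]
  exact commutator_mono le_rfl hM

theorem eq_top_of_sup_center_eq_top (hG : commutator G = ⊤) {M : Subgroup G}
    (hM : M ⊔ center G = ⊤) : M = ⊤ := by
  have : M.Normal := by
    rw [← normalizer_eq_top_iff, eq_top_iff, ← hM]
    exact sup_le le_normalizer (center_le_normalizer _)
  rw [eq_top_iff, ← hG]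
  exact Normal.commutator_le_of_self_sup_commutative_eq_top hM inferInstance

theorem IsQuasisimpleGroup.of_mulEquiv {G' : Type*} [Group G'] (e : G ≃* G')
    (h : IsQuasisimpleGroup G') : IsQuasisimpleGroup G := by
  obtain ⟨hperf, hsimple⟩ := h
  have hcenter : (center G).map e.toMonoidHom = center G' := by
    ext x
    rw [mem_map_equiv, ← SetLike.mem_coe, ← SetLike.mem_coe, coe_center, coe_center,
      ← MulEquivClass.apply_mem_center_iff e, MulEquiv.apply_symm_apply]
  exact ⟨commutator_eq_top_of_surjective e.symm.toMonoidHom e.symm.surjective hperf,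
    (QuotientGroup.congr _ _ e hcenter).isSimpleGroup⟩

theorem IsQuasisimpleGroup.eq_bot_or_eq_top_of_isSubnormal (hG : IsQuasisimpleGroup G)
    {M : Subgroup G} (hsub : M.IsSubnormal) (hperf : commutator M = ⊤) : M = ⊥ ∨ M = ⊤ := by
  rcases (hsub.quotient (K := center G)).eq_bot_or_top_of_isSimpleGroup hG.2 with hbot | htop
  · rw [Subgroup.map_eq_bot_iff, ker_mk'] at hbot
    exact .inl (eq_bot_of_le_center_of_commutator_eq_top hbot hperf)
  · have := congrArg (comap (mk' _)) htop
    rw [comap_map_eq, ker_mk', comap_top] at this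
    exact .inr (eq_top_of_sup_center_eq_top hG.1 this)

theorem IsComponent.map_mulEquiv {G' : Type*} [Group G'] {L : Subgroup G} (hL : IsComponent L)
    (e : G ≃* G') : IsComponent (L.map e.toMonoidHom) :=
  ⟨isSubnormal_iff_subgroup_isSubnormal.mpr
      ((isSubnormal_iff_subgroup_isSubnormal.mp hL.1).map (f := e.toMonoidHom) e.surjective),
    hL.2.of_mulEquiv (L.equivMapOfInjective _ e.injective).symm⟩

instance layer_normal : (layer G).Normal :=
  normal_sSup_of_forall_map_conj_mem fun g _ hL => hL.map_mulEquiv (MulAut.conj g)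

end

section

variable {K Q : Type*} [Group K] [Group Q]

theorem IsComponent.map_eq_top {L : Subgroup K} (hL : IsComponent L) (hL₀ : L ≠ ⊥)
    (hQ : IsQuasisimpleGroup Q) (φ : K →* Q) (hφ : Function.Surjective φ)
    [Group.IsSolvable φ.ker] : L.map φ = ⊤ := by
  refine (hQ.eq_bot_or_eq_top_of_isSubnormal
    ((isSubnormal_iff_subgroup_isSubnormal.mp hL.1).map hφ)
    (commutator_eq_top_of_surjective _ (φ.subgroupMap_surjective L) hL.2.1)).resolve_left
    fun hbot => hL₀ ?_
  have : Group.IsSolvable L := Group.isSolvable_of_isSolvable_injective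
    (inclusion_injective ((Subgroup.map_eq_bot_iff _).mp hbot))
  have := subsingleton_of_isSolvable_of_commutator_eq_top hL.2.1
  exact eq_bot_of_subsingleton L

theorem layer_eq_bot_or_eq_top_of_surjective (hK : commutator K = ⊤)
    (hQ : IsQuasisimpleGroup Q) (φ : K →* Q) (hφ : Function.Surjective φ)
    [Group.IsSolvable φ.ker] : layer K = ⊥ ∨ layer K = ⊤ := by
  refine or_iff_not_imp_left.mpr fun hE => ?_
  obtain ⟨L, hL, hL₀⟩ : ∃ L, IsComponent L ∧ L ≠ ⊥ := by
    simpa [layer, sSup_eq_bot] using hE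
  have hLN : L ⊔ φ.ker = ⊤ := by
    rw [← comap_map_eq, hL.map_eq_top hL₀ hQ φ hφ, comap_top]
  exact eq_top_of_sup_eq_top_of_isSolvable hK
    (top_le_iff.mp (hLN.ge.trans (sup_le_sup_right (le_sSup hL : L ≤ layer K) _)))

end

/-- Every sol-component `K` of a finite group `G` is either
constrained (`E(K) = 1`) or semisimple (`E(K) = K`). -/
theorem solComponent_constrained_or_semisimple
    {G : Type*} [Group G] [Finite G] (K : Subgroup G) (hK : IsSolComponent K) :
    layer ↥K = ⊥ ∨ layer ↥K = ⊤ := by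
  obtain ⟨-, hKperf, -, hQ⟩ := hK
  have : Group.IsSolvable (mk' (solRadical G)).ker := by
    rw [ker_mk']
    exact isSolvable_solRadical
  have := isSolvable_ker_subgroupMap (mk' (solRadical G)) K
  exact layer_eq_bot_or_eq_top_of_surjective hKperf hQ _ ((mk' _).subgroupMap_surjective K)
end

section
/- Let A be a group acting by automorphisms on the finite group G and let K be a subgroup of G. Then K is an (A,sol)-component of G (i.e. K is the subgroup generated by the A-orbit of some sol-component of G) if and only if K is minimal among A-invariant nonsolvable subnormal subgroups of G, i.e. K is A-invariant, subnormal in G and nonsolvable, and every A-invariant nonsolvable subnormal subgroup of G contained in K equals K. -/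
open Pointwise

/-- `G` is *`A`-simple* (with `A` acting via `φ : A →* MulAut G`) if `G` is nonabelian
and the only `A`-invariant normal subgroups of `G` are `1` and `G`. -/
def IsMulASimple {A G : Type*} [Group A] [Group G] (φ : A →* MulAut G) : Prop :=
  (¬ ∀ x y : G, Commute x y) ∧
    ∀ N : Subgroup G, N.Normal → (∀ a : A, φ a • N = N) → N = ⊥ ∨ N = ⊤

/-- The homomorphism `MulAut G →* MulAut (G ⧸ Z(G))` induced by passing to the
quotient by the center (which is characteristic). -/
def centerQuotHom (G : Type*) [Group G] :
    MulAut G →* MulAut (G ⧸ Subgroup.center G) where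
  toFun e := QuotientGroup.congr (Subgroup.center G) (Subgroup.center G) e
      (Subgroup.characteristic_iff_map_eq.mp inferInstance e)
  map_one' := by
    ext x
    induction x using QuotientGroup.induction_on with
    | H x => rfl
  map_mul' e f := by
    ext x
    induction x using QuotientGroup.induction_on with
    | H x => rfl

/-- `G` is *`A`-quasisimple* (with `A` acting via `φ`) if `G` is perfect and
`G/Z(G)` is `A`-simple with respect to the induced action. -/
def IsAQuasisimple {A G : Type*} [Group A] [Group G] (φ : A →* MulAut G) : Prop :=
  commutator G = ⊤ ∧ IsMulASimple ((centerQuotHom G).comp φ)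


/-!
Write `R = Sol(G)` and `Ḡ = G/R`. Two facts drive the proof. First, a subnormal subgroup `H` of a
perfect group `K` with `K ≤ HR` equals `K`: the top step `M ⊴ K` of a subnormal chain has
`K/M` perfect and, being an image of `R ∩ K`, solvable, so `M = K`. In particular a perfect
subnormal subgroup is determined by its image in `Ḡ`. Second, Wielandt's lemma: a component of a
group lies in any given subnormal subgroup or centralizes it.

For a sol-component `C`, the images of the `φ a • C` are components of `Ḡ`, which are
normalized by the layer of `Ḡ`; by the first fact the preimage of the layer normalizes every
`φ a • C`, so the join `K` of the orbit is normal in a normal subgroup of `G`. If `S ≤ K` is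
`A`-invariant, subnormal and nonsolvable, Wielandt's lemma puts some `(φ b • C)R/R` inside
`SR/R` (otherwise `SR/R` would be abelian), invariance then gives `K ≤ SR`, and `S = K` by the
first fact. Conversely, a minimal nonsolvable subnormal subgroup `C` below `K` is perfect with
simple image in `Ḡ`, hence a sol-component, and minimality of `K` makes `K` the join of the
orbit of `C`.
-/

theorem isSubnormal_iff_isSubnormal {G : Type*} [Group G] {H : Subgroup G} :
    IsSubnormal H ↔ H.IsSubnormal := by
  constructor
  · rintro ⟨n, c, rfl, hn, hc⟩
    induction n generalizing c with
    | zero => simp [hn]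
    | succ n ih =>
      exact .step _ _ (hc 0 n.succ_pos).1
        (ih (fun i ↦ c (i + 1)) hn fun i hi ↦ hc (i + 1) (by omega)) (hc 0 n.succ_pos).2
  · intro h
    induction h with
    | top => exact ⟨0, fun _ ↦ ⊤, rfl, rfl, by simp⟩
    | step H K hHK _ hN ih =>
      obtain ⟨n, c, hc0, hn, hc⟩ := ih
      refine ⟨n + 1, fun | 0 => H | i + 1 => c i, rfl, hn, ?_⟩
      rintro (_ | i) hi
      · subst hc0
        exact ⟨hHK, hN⟩
      · exact hc i (by omega)

theorem Group.isSolvable_of_isSolvable_commutator {G : Type*} [Group G]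
    [Group.IsSolvable (commutator G)] : Group.IsSolvable G :=
  Group.isSolvable_of_ker_le_range (commutator G).subtype Abelianization.of
    (by rw [Abelianization.ker_of, Subgroup.range_subtype])

namespace Subgroup

variable {G : Type*} [Group G]

instance isSolvable_subgroupOf (H K : Subgroup G) [Group.IsSolvable H] :
    Group.IsSolvable (H.subgroupOf K) :=
  Group.isSolvable_of_isSolvable_injective (f := K.subtype.subgroupComap H) fun _ _ hxy ↦
    Subtype.ext <| Subtype.ext (congrArg Subtype.val hxy :)

instance isSolvable_map {G' : Type*} [Group G'] (f : G →* G') (H : Subgroup G)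
    [Group.IsSolvable H] : Group.IsSolvable (H.map f) :=
  Group.isSolvable_of_surjective (f.subgroupMap_surjective H)

instance isSolvable_sup (M N : Subgroup G) [N.Normal] [Group.IsSolvable M]
    [Group.IsSolvable N] : Group.IsSolvable ↥(M ⊔ N) :=
  have : Group.IsSolvable (↥(M ⊔ N) ⧸ N.subgroupOf (M ⊔ N)) :=
    Group.isSolvable_of_surjective
      (f := (QuotientGroup.quotientInfEquivProdNormalQuotient M N).toMonoidHom)
      (QuotientGroup.quotientInfEquivProdNormalQuotient M N).surjective
  (Group.isSolvable_iff_subgroup_quotient (N.subgroupOf (M ⊔ N))).2 ⟨inferInstance, this⟩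

theorem isSolvable_of_isSolvable_map_mk' {H N : Subgroup G} [N.Normal] [Group.IsSolvable N]
    (h : Group.IsSolvable (H.map (QuotientGroup.mk' N))) : Group.IsSolvable H :=
  Group.isSolvable_of_ker_le_range (N.subgroupOf H).subtype ((QuotientGroup.mk' N).subgroupMap H)
    fun x hx ↦ by simpa [mem_subgroupOf] using congrArg Subtype.val hx

theorem le_sup_of_map_mk'_le {H K N : Subgroup G} [N.Normal]
    (h : H.map (QuotientGroup.mk' N) ≤ K.map (QuotientGroup.mk' N)) : H ≤ K ⊔ N := by
  rw [← QuotientGroup.ker_mk' N, ← comap_map_eq]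
  exact map_le_iff_le_comap.1 h

theorem characteristic_sSup_of_map_mem {S : Set (Subgroup G)}
    (hS : ∀ ϕ : G ≃* G, ∀ H ∈ S, H.map ϕ.toMonoidHom ∈ S) :
    (sSup S).Characteristic := by
  refine characteristic_iff_map_le.2 fun ϕ ↦ ?_
  rw [(gc_map_comap _).l_sSup]
  exact iSup₂_le fun H hH ↦ le_sSup (hS ϕ H hH)

theorem normal_map_subtype_of_characteristic {K : Subgroup G} [K.Normal] (N : Subgroup K)
    [N.Characteristic] : (N.map K.subtype).Normal := by
  constructor
  rintro _ ⟨x, hx, rfl⟩ g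
  exact ⟨MulAut.conjNormal g x, characteristic_iff_le_comap.1 ‹_› _ hx,
    MulAut.conjNormal_apply g x⟩

theorem map_center_of_mulEquiv {G' : Type*} [Group G'] (e : G ≃* G') :
    (center G).map e.toMonoidHom = center G' := by
  ext y
  obtain ⟨x, rfl⟩ := e.surjective y
  simp [mem_center_iff, e.surjective.forall, ← map_mul]

theorem IsSubnormal.eq_top_of_sup_eq_top [Group.IsPerfect G] {H N : Subgroup G}
    (hH : H.IsSubnormal) [Group.IsSolvable N] (hHN : H ⊔ N = ⊤) : H = ⊤ := by
  induction hH with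
  | top => rfl
  | step H K hHK _ hN ih =>
    obtain rfl := ih (top_le_iff.1 (hHN ▸ sup_le_sup_right hHK N))
    have : H.Normal :=
      ⟨fun h hh g ↦ by simpa using (normal_subgroupOf_iff le_top).1 hN h g hh⟩
    have hsurj : Function.Surjective ((QuotientGroup.mk' H).comp N.subtype) := by
      rw [← MonoidHom.range_eq_top, MonoidHom.range_comp, range_subtype,
        ← map_top_of_surjective _ (QuotientGroup.mk'_surjective H), ← hHN, map_sup,
        QuotientGroup.map_mk'_self, bot_sup_eq]
    have := Group.isSolvable_of_surjective hsurj
    by_contra hne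
    have : Nontrivial (G ⧸ H) := by
      rwa [← not_subsingleton_iff_nontrivial, QuotientGroup.subsingleton_iff]
    exact Group.IsPerfect.not_isSolvable (G ⧸ H) ‹_›

theorem eq_of_isSubnormal_of_le_sup {H K N : Subgroup G} (hH : H.IsSubnormal) (hHK : H ≤ K)
    (hK : ⁅K, K⁆ = K) [N.Normal] [Group.IsSolvable N] (hKHN : K ≤ H ⊔ N) : H = K := by
  have : Group.IsPerfect K := isPerfect_iff.2 hK
  have hsup : H.subgroupOf K ⊔ N.subgroupOf K = ⊤ := by
    rw [eq_top_iff]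
    rintro ⟨k, hk⟩ -
    obtain ⟨h, hh, n, hn, rfl⟩ : k ∈ (H : Set G) * N := mul_normal H N ▸ hKHN hk
    have hnK : n ∈ K := by simpa using K.mul_mem (K.inv_mem (hHK hh)) hk
    exact mul_mem_sup (x := (⟨h, hHK hh⟩ : K)) (y := ⟨n, hnK⟩) hh hn
  exact le_antisymm hHK (subgroupOf_eq_top.1 (hH.subgroupOf.eq_top_of_sup_eq_top hsup))

theorem commutator_iSup_eq_self {ι : Sort*} {H : ι → Subgroup G}
    (hH : ∀ i, ⁅H i, H i⁆ = H i) : ⁅⨆ i, H i, ⨆ i, H i⁆ = ⨆ i, H i :=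
  le_antisymm (commutator_le_self _) <| iSup_le fun i ↦
    (hH i).ge.trans (commutator_mono (le_iSup H i) (le_iSup H i))

theorem IsSubnormal.le_of_le_sup {C D N : Subgroup G} (hC : C.IsSubnormal) (hCp : ⁅C, C⁆ = C)
    (hDp : ⁅D, D⁆ = D) [N.Normal] [Group.IsSolvable N] (hD : D ≤ C ⊔ N) : D ≤ C := by
  have hperf : ⁅C ⊔ D, C ⊔ D⁆ = C ⊔ D :=
    le_antisymm (commutator_le_self _)
      (sup_le (hCp.ge.trans (commutator_mono le_sup_left le_sup_left))
        (hDp.ge.trans (commutator_mono le_sup_right le_sup_right)))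
  exact le_sup_right.trans
    (eq_of_isSubnormal_of_le_sup hC le_sup_left hperf (sup_le le_sup_left hD)).ge

end Subgroup

section SolvableRadical

variable {G : Type*} [Group G]

theorem le_solRadical {N : Subgroup G} (hN : N.Normal) [Group.IsSolvable N] :
    N ≤ solRadical G :=
  le_sSup ⟨hN, ‹_›⟩

instance solRadical_characteristic : (solRadical G).Characteristic :=
  Subgroup.characteristic_sSup_of_map_mem fun ϕ N ⟨hN, (_ : Group.IsSolvable N)⟩ ↦
    ⟨hN.map _ ϕ.surjective, Subgroup.isSolvable_map _ N⟩

theorem smul_solRadical (e : MulAut G) : e • solRadical G = solRadical G :=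
  Subgroup.characteristic_iff_map_eq.1 inferInstance e

instance isSolvable_solRadical_s13 [Finite G] : Group.IsSolvable (solRadical G) := by
  obtain ⟨N, hmax⟩ := (Set.toFinite {N : Subgroup G | N.Normal ∧ Group.IsSolvable N}).exists_maximal
    ⟨⊥, Subgroup.normal_bot, inferInstance⟩
  obtain ⟨hN, hNs⟩ := hmax.1
  suffices solRadical G = N from this ▸ hNs
  refine le_antisymm (sSup_le fun M ⟨hM, (_ : Group.IsSolvable M)⟩ ↦ ?_) (le_solRadical hN)
  exact le_sup_left.trans (hmax.2 ⟨Subgroup.sup_normal M N, inferInstance⟩ le_sup_right)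

open Subgroup in
theorem Subgroup.IsSubnormal.le_solRadical [Finite G] {H : Subgroup G} (hH : H.IsSubnormal)
    [Group.IsSolvable H] : H ≤ solRadical G := by
  induction hcard : Nat.card G using Nat.strong_induction_on generalizing G with
  | _ n ih =>
  obtain rfl | ⟨K, hK, hHK, hKG⟩ := hH.lt_normal
  · exact _root_.le_solRadical normal_top
  have hcardK : Nat.card K < n := hcard ▸ lt_of_le_of_ne
    (Nat.card_le_card_of_injective _ K.subtype_injective) (mt (card_eq_iff_eq_top K).1 hKG.ne)
  calc H = (H.subgroupOf K).map K.subtype := (map_subgroupOf_eq_of_le hHK).symm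
    _ ≤ (solRadical K).map K.subtype := map_mono (ih _ hcardK hH.subgroupOf rfl)
    _ ≤ solRadical G := _root_.le_solRadical (normal_map_subtype_of_characteristic _)

end SolvableRadical

namespace IsQuasisimpleGroup

variable {Q : Type*} [Group Q]

theorem isPerfect (hQ : IsQuasisimpleGroup Q) : Group.IsPerfect Q := ⟨hQ.1⟩

theorem nontrivial (hQ : IsQuasisimpleGroup Q) : Nontrivial Q :=
  have := hQ.2.toNontrivial
  (QuotientGroup.mk'_surjective (Subgroup.center Q)).nontrivial

theorem not_isSolvable (hQ : IsQuasisimpleGroup Q) : ¬ Group.IsSolvable Q :=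
  have := hQ.isPerfect
  have := hQ.nontrivial
  Group.IsPerfect.not_isSolvable Q

theorem of_mulEquiv_s13 {Q' : Type*} [Group Q'] (e : Q ≃* Q') (hQ : IsQuasisimpleGroup Q) :
    IsQuasisimpleGroup Q' :=
  have := hQ.isPerfect
  have := hQ.2
  ⟨(Group.IsPerfect.ofSurjective (f := e.toMonoidHom) e.surjective).commutator_eq_top,
    (QuotientGroup.congr _ _ e (Subgroup.map_center_of_mulEquiv e)).symm.isSimpleGroup⟩

theorem of_isSimpleGroup [IsSimpleGroup Q] [Group.IsPerfect Q] : IsQuasisimpleGroup Q := by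
  refine ⟨Group.IsPerfect.commutator_eq_top, ?_⟩
  have hZ : Subgroup.center Q = ⊥ := by
    refine (Subgroup.normal_of_characteristic _).eq_bot_or_eq_top.resolve_right fun h ↦ ?_
    have := Subgroup.center_eq_top_iff.1 h
    exact false_of_nontrivial_of_subsingleton Q
  exact ((QuotientGroup.quotientMulEquivOfEq hZ).trans QuotientGroup.quotientBot).isSimpleGroup

theorem le_center_or_eq_top (hQ : IsQuasisimpleGroup Q) {N : Subgroup Q} [N.Normal] :
    N ≤ Subgroup.center Q ∨ N = ⊤ := by
  have := hQ.2
  rcases (Subgroup.Normal.map ‹_› _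
    (QuotientGroup.mk'_surjective (Subgroup.center Q))).eq_bot_or_eq_top with h | h
  · left
    rwa [Subgroup.map_eq_bot_iff, QuotientGroup.ker_mk'] at h
  · right
    have hsup : N ⊔ Subgroup.center Q = ⊤ := by
      rw [← QuotientGroup.ker_mk' (Subgroup.center Q), ← Subgroup.comap_map_eq, h,
        Subgroup.comap_top]
    exact top_le_iff.1 (hQ.1 ▸
      Subgroup.Normal.commutator_le_of_self_sup_commutative_eq_top hsup inferInstance)

end IsQuasisimpleGroup

namespace Subgroup

variable {G : Type*} [Group G]

def commutatorIter (Y L : Subgroup G) : ℕ → Subgroup G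
  | 0 => Y
  | n + 1 => ⁅commutatorIter Y L n, L⁆

theorem commutatorIter_le_left (Y L : Subgroup G) [Y.Normal] (n : ℕ) :
    commutatorIter Y L n ≤ Y := by
  induction n with
  | zero => exact le_rfl
  | succ n ih => exact (commutator_mono ih le_rfl).trans (commutator_le_left Y L)

theorem IsSubnormal.exists_commutatorIter_le {H L : Subgroup G} (hH : H.IsSubnormal)
    (hLH : L ≤ H) (Y : Subgroup G) : ∃ n, commutatorIter Y L n ≤ H := by
  induction hH with
  | top => exact ⟨0, le_top⟩
  | step H K hHK _ hN ih =>
    obtain ⟨n, hn⟩ := ih (hLH.trans hHK)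
    refine ⟨n + 1, commutator_le.2 fun k hk l hl ↦ ?_⟩
    have hkl := (normal_subgroupOf_iff hHK).1 hN l k (hLH hl) (hn hk)
    simpa [commutatorElement_def, mul_assoc] using H.mul_mem hkl (H.inv_mem (hLH hl))

theorem commutator_eq_bot_of_commutatorIter_eq_bot {Y L : Subgroup G} (hL : ⁅L, L⁆ = L)
    {n : ℕ} (hn : commutatorIter Y L (n + 1) = ⊥) : ⁅Y, L⁆ = ⊥ := by
  induction n with
  | zero => exact hn
  | succ n ih =>
    refine ih ?_
    have := commutator_commutator_eq_bot_of_rotate (H₁ := L) (H₂ := L)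
      (H₃ := commutatorIter Y L n) (by rwa [commutator_comm L]) hn
    rwa [hL, commutator_comm] at this

/-- Wielandt: the iterated commutators `⁅⋯⁅N, L⁆⋯, L⁆` eventually fall into `N ⊓ L`, which is
central in `L` unless `L ≤ N`; the three subgroups lemma then peels them off one at a time. -/
theorem IsSubnormal.le_or_commutator_eq_bot_of_normal {L : Subgroup G} (hL : L.IsSubnormal)
    (hLq : IsQuasisimpleGroup L) (N : Subgroup G) [N.Normal] : L ≤ N ∨ ⁅N, L⁆ = ⊥ := by
  obtain ⟨n, hn⟩ := hL.exists_commutatorIter_le le_rfl N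
  rcases hLq.le_center_or_eq_top (N := N.subgroupOf L) with hZ | hLN
  · right
    refine commutator_eq_bot_of_commutatorIter_eq_bot (isPerfect_iff.1 hLq.isPerfect) (n := n) ?_
    refine le_bot_iff.1 <|
      (commutator_mono (le_inf (commutatorIter_le_left N L n) hn) le_rfl).trans ?_
    refine commutator_le.2 fun x hx l hl ↦ ?_
    have := mem_center_iff.1 (hZ (show (⟨x, hx.2⟩ : L) ∈ N.subgroupOf L from hx.1)) ⟨l, hl⟩
    rw [mem_bot, commutatorElement_eq_one_iff_mul_comm]
    exact (congrArg Subtype.val this).symm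
  · exact Or.inl (subgroupOf_eq_top.1 hLN)

end Subgroup

namespace IsComponent

variable {G : Type*} [Group G] {L : Subgroup G}

theorem isSubnormal (hL : IsComponent L) : L.IsSubnormal :=
  isSubnormal_iff_isSubnormal.1 hL.1

theorem map_mulEquiv_s13 {G' : Type*} [Group G'] (hL : IsComponent L) (e : G ≃* G') :
    IsComponent (L.map e.toMonoidHom) :=
  ⟨isSubnormal_iff_isSubnormal.2 (hL.isSubnormal.map e.surjective),
    hL.2.of_mulEquiv_s13 (L.equivMapOfInjective _ e.injective)⟩

theorem le_or_commutator_eq_bot (hL : IsComponent L) {T : Subgroup G} (hT : T.IsSubnormal) :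
    L ≤ T ∨ ⁅T, L⁆ = ⊥ := by
  induction hT with
  | top => exact Or.inl le_top
  | step T K hTK _ hN ih =>
    rcases ih with hLK | hKL
    · rcases (hL.isSubnormal.subgroupOf (K := K)).le_or_commutator_eq_bot_of_normal
        (hL.2.of_mulEquiv_s13 (Subgroup.subgroupOfEquivOfLe hLK).symm) (T.subgroupOf K) with h | h
      · left
        simpa [Subgroup.map_subgroupOf_eq_of_le, hLK, hTK]
          using Subgroup.map_mono (f := K.subtype) h
      · right
        simpa [Subgroup.map_commutator, Subgroup.map_subgroupOf_eq_of_le, hLK, hTK]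
          using congrArg (Subgroup.map K.subtype) h
    · exact Or.inr (le_bot_iff.1 (hKL ▸ Subgroup.commutator_mono hTK le_rfl))

theorem le_normalizer (hL : IsComponent L) {M : Subgroup G} (hM : IsComponent M) :
    M ≤ Subgroup.normalizer L := by
  rcases hM.le_or_commutator_eq_bot hL.isSubnormal with h | h
  · exact h.trans Subgroup.le_normalizer
  · rw [Subgroup.commutator_comm, Subgroup.commutator_eq_bot_iff_le_centralizer] at h
    exact h.trans (Subgroup.centralizer_le_normalizer _)

theorem layer_le_normalizer (hL : IsComponent L) : layer G ≤ Subgroup.normalizer L :=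
  sSup_le fun _ hM ↦ hL.le_normalizer hM

end IsComponent

instance layer_characteristic (G : Type*) [Group G] : (layer G).Characteristic :=
  Subgroup.characteristic_sSup_of_map_mem fun ϕ _ hL ↦ IsComponent.map_mulEquiv_s13 hL ϕ

namespace IsSolComponent

variable {G : Type*} [Group G] {C : Subgroup G}

theorem isSubnormal (hC : IsSolComponent C) : C.IsSubnormal :=
  isSubnormal_iff_isSubnormal.1 hC.1

theorem commutator_eq_self (hC : IsSolComponent C) : ⁅C, C⁆ = C :=
  Subgroup.isPerfect_iff.1 ⟨hC.2.1⟩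

theorem not_isSolvable_of_le (hC : IsSolComponent C) {H : Subgroup G} (hCH : C ≤ H) :
    ¬ Group.IsSolvable H := fun _ ↦
  have := Group.isSolvable_of_isSolvable_injective (Subgroup.inclusion_injective hCH)
  hC.2.2.2.not_isSolvable (Subgroup.isSolvable_map _ C)

theorem smul (hC : IsSolComponent C) (e : MulAut G) : IsSolComponent (e • C) := by
  have : Group.IsPerfect C := ⟨hC.2.1⟩
  refine ⟨isSubnormal_iff_isSubnormal.2 (hC.isSubnormal.smul e),
    (Group.IsPerfect.map e.toMonoidHom (H := C)).commutator_eq_top, ?_⟩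
  have hmap : (e • C).map (QuotientGroup.mk' (solRadical G)) =
      (C.map (QuotientGroup.mk' (solRadical G))).map
        (QuotientGroup.congr _ _ e (smul_solRadical e)).toMonoidHom := by
    change (C.map e.toMonoidHom).map _ = _
    rw [Subgroup.map_map, Subgroup.map_map]
    rfl
  rw [hmap]
  exact hC.2.2.map_mulEquiv_s13 _

theorem mem_normalizer [Finite G] (hC : IsSolComponent C) {x : G}
    (hx : QuotientGroup.mk' (solRadical G) x ∈
      Subgroup.normalizer (C.map (QuotientGroup.mk' (solRadical G)) : Set (G ⧸ solRadical G))) :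
    x ∈ Subgroup.normalizer (C : Set G) := by
  have hD := hC.smul (MulAut.conj x)
  have hmap : (MulAut.conj x • C).map (QuotientGroup.mk' (solRadical G)) =
      C.map (QuotientGroup.mk' (solRadical G)) := by
    rw [Subgroup.mem_normalizer_iff_map_conj_eq] at hx
    conv_rhs => rw [← hx]
    change (C.map (MulAut.conj x).toMonoidHom).map _ = _
    rw [Subgroup.map_map, Subgroup.map_map]
    rfl
  rw [Subgroup.mem_normalizer_iff_map_conj_eq]
  exact le_antisymm
    (hC.isSubnormal.le_of_le_sup hC.commutator_eq_self hD.commutator_eq_self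
      (Subgroup.le_sup_of_map_mk'_le hmap.le))
    (hD.isSubnormal.le_of_le_sup hD.commutator_eq_self hC.commutator_eq_self
      (Subgroup.le_sup_of_map_mk'_le hmap.ge))

end IsSolComponent

theorem isSubnormal_iSup_of_isSolComponent {G : Type*} [Group G] [Finite G] {ι : Sort*}
    {C : ι → Subgroup G} (hC : ∀ i, IsSolComponent (C i)) : (⨆ i, C i).IsSubnormal := by
  set P := (layer (G ⧸ solRadical G)).comap (QuotientGroup.mk' (solRadical G))
  have hCP : ⨆ i, C i ≤ P := iSup_le fun i ↦ Subgroup.map_le_iff_le_comap.1 (le_sSup (hC i).2.2)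
  have hPC : P ≤ Subgroup.normalizer (⨆ i, C i : Subgroup G) := fun x hx ↦
    Subgroup.iInf_normalizer_le_normalizer_iSup _ <| Subgroup.mem_iInf.2 fun i ↦
      (hC i).mem_normalizer ((hC i).2.2.layer_le_normalizer hx)
  exact .step _ P hCP (Subgroup.Normal.isSubnormal (Subgroup.Normal.comap inferInstance _))
    ((Subgroup.normal_subgroupOf_iff_le_normalizer hCP).2 hPC)

section MinimalNonsolvable

variable {G : Type*} [Group G] {C : Subgroup G}

theorem commutator_eq_self_of_minimal
    (hC : Minimal (fun M : Subgroup G ↦ M.IsSubnormal ∧ ¬ Group.IsSolvable M) C) :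
    ⁅C, C⁆ = C := by
  have hsub : ⁅C, C⁆.IsSubnormal := by
    rw [← Subgroup.map_subtype_commutator]
    exact (Subgroup.Normal.isSubnormal inferInstance).trans' hC.1.1
  refine hC.eq_of_le ⟨hsub, fun hs ↦ hC.1.2 ?_⟩ (Subgroup.commutator_le_self C)
  rw [← Subgroup.map_subtype_commutator] at hs
  let e := (commutator C).equivMapOfInjective _ C.subtype_injective
  have := Group.isSolvable_of_isSolvable_injective (f := e.toMonoidHom) e.injective
  exact Group.isSolvable_of_isSolvable_commutator

theorem isSimpleGroup_map_mk'_of_minimal [Finite G]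
    (hC : Minimal (fun M : Subgroup G ↦ M.IsSubnormal ∧ ¬ Group.IsSolvable M) C) :
    IsSimpleGroup (C.map (QuotientGroup.mk' (solRadical G))) := by
  set g := (QuotientGroup.mk' (solRadical G)).subgroupMap C
  have hg : Function.Surjective g := MonoidHom.subgroupMap_surjective _ _
  have : Nontrivial (C.map (QuotientGroup.mk' (solRadical G))) := by
    rw [Subgroup.nontrivial_iff_ne_bot, Ne, Subgroup.map_eq_bot_iff, QuotientGroup.ker_mk']
    exact fun h ↦
      hC.1.2 (Group.isSolvable_of_isSolvable_injective (Subgroup.inclusion_injective h))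
  refine ⟨fun N hN ↦ ?_⟩
  have hM : ((N.comap g).map C.subtype).IsSubnormal := (hN.comap g).isSubnormal.trans' hC.1.1
  rw [← Subgroup.map_comap_eq_self_of_surjective hg N]
  by_cases hMs : Group.IsSolvable ((N.comap g).map C.subtype)
  · left
    rw [eq_bot_iff]
    rintro _ ⟨x, hx, rfl⟩
    have hxR : (x : G) ∈ solRadical G := hM.le_solRadical ⟨x, hx, rfl⟩
    exact Subgroup.mem_bot.2 (Subtype.ext ((QuotientGroup.eq_one_iff _).2 hxR))
  · right
    have hMC := hC.eq_of_le ⟨hM, hMs⟩ (Subgroup.map_subtype_le _)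
    have : N.comap g = ⊤ := eq_top_iff.2 fun y _ ↦ by
      obtain ⟨z, hz, hzy⟩ := hMC.ge y.2
      rwa [← Subtype.ext hzy]
    rw [this, Subgroup.map_top_of_surjective _ hg]

theorem isSolComponent_of_minimal [Finite G]
    (hC : Minimal (fun M : Subgroup G ↦ M.IsSubnormal ∧ ¬ Group.IsSolvable M) C) :
    IsSolComponent C := by
  have : Group.IsPerfect C := Subgroup.isPerfect_iff.2 (commutator_eq_self_of_minimal hC)
  have := isSimpleGroup_map_mk'_of_minimal hC
  have : Group.IsPerfect (C.map (QuotientGroup.mk' (solRadical G))) := Group.IsPerfect.map _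
  exact ⟨isSubnormal_iff_isSubnormal.2 hC.1.1, Group.IsPerfect.commutator_eq_top,
    isSubnormal_iff_isSubnormal.2 (hC.1.1.map (QuotientGroup.mk'_surjective _)),
    IsQuasisimpleGroup.of_isSimpleGroup⟩

end MinimalNonsolvable

theorem le_iSup_smul {A G : Type*} [Monoid A] [Group G] (φ : A →* MulAut G) (C : Subgroup G) :
    C ≤ ⨆ a, φ a • C :=
  le_iSup_of_le (f := fun a ↦ φ a • C) 1 (by rw [map_one, one_smul])

theorem smul_iSup_smul {A G : Type*} [Group A] [Group G] (φ : A →* MulAut G) (C : Subgroup G)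
    (a : A) : φ a • ⨆ b, φ b • C = ⨆ b, φ b • C := by
  change (⨆ b, φ b • C).map (φ a).toMonoidHom = _
  rw [Subgroup.map_iSup]
  exact (Equiv.mulLeft a).iSup_congr fun b ↦ by
    change φ (a * b) • C = _
    rw [map_mul, mul_smul]
    rfl

theorem IsSolComponent.eq_iSup_smul_of_le {A G : Type*} [Group A] [Group G] [Finite G]
    (φ : A →* MulAut G) {C : Subgroup G} (hC : IsSolComponent C) {S : Subgroup G}
    (hSA : ∀ a, φ a • S = S) (hS : S.IsSubnormal) (hSs : ¬ Group.IsSolvable S)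
    (hSK : S ≤ ⨆ a, φ a • C) : S = ⨆ a, φ a • C := by
  set f := QuotientGroup.mk' (solRadical G)
  by_cases h : ∃ b, (φ b • C).map f ≤ S.map f
  · obtain ⟨b, hb⟩ := h
    refine Subgroup.eq_of_isSubnormal_of_le_sup (N := solRadical G) hS hSK
      (Subgroup.commutator_iSup_eq_self fun a ↦ (hC.smul (φ a)).commutator_eq_self)
      (iSup_le fun a ↦ ?_)
    have : φ (a * b⁻¹) • (φ b • C) ≤ φ (a * b⁻¹) • (S ⊔ solRadical G) :=
      Subgroup.map_mono (Subgroup.le_sup_of_map_mk'_le hb)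
    rwa [Subgroup.smul_sup, hSA, smul_smul, ← map_mul, inv_mul_cancel_right,
      smul_solRadical] at this
  · refine absurd (Subgroup.isSolvable_of_isSolvable_map_mk' (N := solRadical G) ?_) hSs
    have hcent : ⨆ a, φ a • C ≤ (Subgroup.centralizer (S.map f)).comap f :=
      iSup_le fun a ↦ by
        rw [← Subgroup.map_le_iff_le_comap, ← Subgroup.commutator_eq_bot_iff_le_centralizer,
          Subgroup.commutator_comm]
        exact ((hC.smul (φ a)).2.2.le_or_commutator_eq_bot
          (hS.map (QuotientGroup.mk'_surjective _))).resolve_left fun ha ↦ h ⟨a, ha⟩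
    have := Subgroup.le_centralizer_iff_isMulCommutative.1
      (Subgroup.map_le_iff_le_comap.2 (hSK.trans hcent))
    exact Group.isSolvable_of_comm mul_comm'

/-- `K` is an `(A,sol)`-component of `G` (the subgroup generated by
the `A`-orbit of some sol-component of `G`) iff `K` is minimal among `A`-invariant
nonsolvable subnormal subgroups of `G`. -/
theorem isASolComponent_iff_minimal_invariant_nonsolvable_subnormal
    {A G : Type*} [Group A] [Group G] [Finite G] (φ : A →* MulAut G) (K : Subgroup G) :
    (∃ C : Subgroup G, IsSolComponent C ∧ K = ⨆ a : A, φ a • C) ↔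
      ((∀ a : A, φ a • K = K) ∧ IsSubnormal K ∧ ¬ IsSolvable ↥K ∧
        ∀ S : Subgroup G, (∀ a : A, φ a • S = S) → IsSubnormal S → ¬ IsSolvable ↥S →
          S ≤ K → S = K) := by
  constructor
  · rintro ⟨C, hC, rfl⟩
    exact ⟨smul_iSup_smul φ C,
      isSubnormal_iff_isSubnormal.2 (isSubnormal_iSup_of_isSolComponent fun a ↦ hC.smul (φ a)),
      hC.not_isSolvable_of_le (le_iSup_smul φ C), fun S hSA hS hSs hSK ↦
        hC.eq_iSup_smul_of_le φ hSA (isSubnormal_iff_isSubnormal.1 hS) hSs hSK⟩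
  · rintro ⟨hKA, hK, hKs, hmin⟩
    obtain ⟨C, hCK, hCmin⟩ :=
      (Set.toFinite {M : Subgroup G | M.IsSubnormal ∧ ¬ Group.IsSolvable M}).exists_le_minimal
        ⟨isSubnormal_iff_isSubnormal.1 hK, hKs⟩
    have hC := isSolComponent_of_minimal hCmin
    exact ⟨C, hC, (hmin _ (smul_iSup_smul φ C)
      (isSubnormal_iff_isSubnormal.2 (isSubnormal_iSup_of_isSolComponent fun a ↦ hC.smul (φ a)))
      (hC.not_isSolvable_of_le (le_iSup_smul φ C))
      (iSup_le fun a ↦ hKA a ▸ Subgroup.map_mono hCK)).symm⟩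
end
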